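/- Suppose the quadruple (λ,x,μ,y) ∈ ℂ × ℂⁿ × ℂ × ℂᵐ is such that cᵀy = 1 and the Jacobian J(λ,μ,y) is invertible. Then (λ,x,μ,y) solves the two-parameter eigenvalue problem, i.e. A(λ,μ)x = 0 and B(λ,μ)y = 0, if and only if there exist functions g : ℂ → ℂ and Y : ℂ → ℂᵐ, analytic at λ, with g(λ) = μ and Y(λ) = y, such that B(s,g(s))Y(s) = 0 and cᵀY(s) = 1 for all s in some neighborhood of λ, and (A₁ + λA₂ + g(λ)A₃)x = 0. -/

import Mathlib

open Matrix

/-!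
The forward direction is the analytic implicit function theorem applied to
`(s, μ, y) ↦ (cᵀy, B(s,μ)y)` at `(λ, μ, y)`: the partial derivative of this map in `(μ, y)` is the
Jacobian `J(λ,μ,y)` with its coordinates reordered, hence invertible. The converse is evaluation
at `s = λ`.
-/

open scoped Topology ContDiff

theorem ContDiffAt.exists_analyticAt_implicitFunction {𝕜 : Type*} [RCLike 𝕜]
    {E₁ : Type*} [NormedAddCommGroup E₁] [NormedSpace 𝕜 E₁] [CompleteSpace E₁]
    {E₂ : Type*} [NormedAddCommGroup E₂] [NormedSpace 𝕜 E₂] [CompleteSpace E₂]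
    {F : Type*} [NormedAddCommGroup F] [NormedSpace 𝕜 F] [CompleteSpace F]
    {f : E₁ × E₂ → F} {a : E₁} {b : E₂} (hf : ContDiffAt 𝕜 ω f (a, b))
    (hf₂ : (fderiv 𝕜 (fun z ↦ f (a, z)) b).IsInvertible) :
    ∃ ψ : E₁ → E₂, AnalyticAt 𝕜 ψ a ∧ ψ a = b ∧ ∀ᶠ s in 𝓝 a, f (s, ψ s) = f (a, b) := by
  have hpartial : fderiv 𝕜 f (a, b) ∘L .inr 𝕜 E₁ E₂ = fderiv 𝕜 (fun z ↦ f (a, z)) b :=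
    (((hf.differentiableAt (by simp)).hasFDerivAt.comp b
      (hasFDerivAt_prodMk_right a b)).fderiv).symm
  rw [← hpartial] at hf₂
  exact ⟨hf.implicitFunction (by simp) hf₂, (hf.contDiffAt_implicitFunction _ hf₂).analyticAt,
    hf.implicitFunction_apply_self _ hf₂, hf.eventually_apply_implicitFunction _ hf₂⟩

theorem ContinuousLinearMap.isInvertible_of_injective {𝕜 : Type*} [NontriviallyNormedField 𝕜]
    [CompleteSpace 𝕜] {E : Type*} [NormedAddCommGroup E] [NormedSpace 𝕜 E] [FiniteDimensional 𝕜 E]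
    {L : E →L[𝕜] E} (hL : Function.Injective L) : L.IsInvertible :=
  ⟨(LinearEquiv.ofInjectiveEndo L.toLinearMap hL).toContinuousLinearEquiv, rfl⟩

theorem Matrix.fromBlocks_replicateCol_replicateRow_mulVec_sumElim {R ι : Type*} [CommSemiring R]
    [Fintype ι] (M : Matrix ι ι R) (v c w : ι → R) (t : R) :
    fromBlocks M (replicateCol (Fin 1) v) (replicateRow (Fin 1) c) 0 *ᵥ Sum.elim w (fun _ ↦ t) =
      Sum.elim (M *ᵥ w + t • v) (fun _ ↦ c ⬝ᵥ w) := by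
  ext (i | i) <;> simp [mulVec, dotProduct, replicateCol, replicateRow, mul_comm]

theorem Matrix.injective_of_isUnit_fromBlocks_replicateCol_replicateRow {K ι : Type*} [Field K]
    [Fintype ι] [DecidableEq ι] {M : Matrix ι ι K} {v c : ι → K}
    (hJ : IsUnit (fromBlocks M (replicateCol (Fin 1) v) (replicateRow (Fin 1) c) 0)) :
    Function.Injective fun w : K × (ι → K) ↦ (c ⬝ᵥ w.2, M *ᵥ w.2 + w.1 • v) := by
  rintro ⟨t, w⟩ ⟨t', w'⟩ h
  have hcol : Sum.elim w (fun _ : Fin 1 ↦ t) = Sum.elim w' (fun _ ↦ t') := by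
    apply mulVec_injective_iff_isUnit.mpr hJ
    simp only [fromBlocks_replicateCol_replicateRow_mulVec_sumElim]
    obtain ⟨hdot, hmul⟩ := Prod.mk.inj h
    rw [hdot, hmul]
  exact Prod.ext (congrFun hcol (.inr 0)) (funext fun i ↦ congrFun hcol (.inl i))

section
variable {𝕜 ι : Type*} [RCLike 𝕜] [Fintype ι]

def twoParameterResidual (B₁ B₂ B₃ : Matrix ι ι 𝕜) (c : ι → 𝕜) (p : 𝕜 × 𝕜 × (ι → 𝕜)) :
    𝕜 × (ι → 𝕜) :=
  (c ⬝ᵥ p.2.2, (B₁ + p.1 • B₂ + p.2.1 • B₃) *ᵥ p.2.2)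

variable (B₁ B₂ B₃ : Matrix ι ι 𝕜) (c : ι → 𝕜)

theorem contDiff_twoParameterResidual : ContDiff 𝕜 ω (twoParameterResidual B₁ B₂ B₃ c) := by
  have hmv (M : Matrix ι ι 𝕜) : ContDiff 𝕜 ω (M *ᵥ ·) :=
    (LinearMap.toContinuousLinearMap (mulVecLin M)).contDiff
  unfold twoParameterResidual
  simp only [add_mulVec, smul_mulVec, dotProduct]
  fun_prop

theorem fderiv_twoParameterResidual_apply (s : 𝕜) (z w : 𝕜 × (ι → 𝕜)) :
    fderiv 𝕜 (fun z ↦ twoParameterResidual B₁ B₂ B₃ c (s, z)) z w =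
      (c ⬝ᵥ w.2, (B₁ + s • B₂ + z.1 • B₃) *ᵥ w.2 + w.1 • B₃ *ᵥ z.2) := by
  let fst := ContinuousLinearMap.fst 𝕜 𝕜 (ι → 𝕜)
  let snd := ContinuousLinearMap.snd 𝕜 𝕜 (ι → 𝕜)
  let mv (N : Matrix ι ι 𝕜) := LinearMap.toContinuousLinearMap (mulVecLin N)
  let dot := LinearMap.toContinuousLinearMap (dotProductBilin 𝕜 𝕜 c)
  have h := ((dot.comp snd).hasFDerivAt (x := z)).prodMk
    (((mv (B₁ + s • B₂)).comp snd).hasFDerivAt.add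
      (fst.hasFDerivAt.smul ((mv B₃).comp snd).hasFDerivAt))
  rw [(h.congr_of_eventuallyEq (.of_forall fun z ↦ ?_)).fderiv] <;>
    simp [twoParameterResidual, dot, mv, fst, snd, add_mulVec, smul_mulVec, add_assoc]

variable {B₁ B₂ B₃ c} in
theorem isInvertible_fderiv_twoParameterResidual [DecidableEq ι] {lam μ : 𝕜} {y : ι → 𝕜}
    (hJ : IsUnit (fromBlocks (B₁ + lam • B₂ + μ • B₃)
      (replicateCol (Fin 1) (B₃ *ᵥ y)) (replicateRow (Fin 1) c) 0)) :
    (fderiv 𝕜 (fun z ↦ twoParameterResidual B₁ B₂ B₃ c (lam, z)) (μ, y)).IsInvertible := by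
  apply ContinuousLinearMap.isInvertible_of_injective
  convert injective_of_isUnit_fromBlocks_replicateCol_replicateRow hJ using 1
  ext1 w
  exact fderiv_twoParameterResidual_apply B₁ B₂ B₃ c lam (μ, y) w

end

/-- **Equivalence between the two-parameter eigenvalue problem and the nonlinearized NEP.**
Suppose `(λ,x,μ,y)` is such that `cᵀy = 1` and the Jacobian `J(λ,μ,y)` is invertible.  Then
`(λ,x,μ,y)` solves the two-parameter eigenvalue problem `A(λ,μ)x = 0`, `B(λ,μ)y = 0` if and only
if there exist functions `g : ℂ → ℂ` and `Y : ℂ → ℂᵐ`, analytic at `λ`, with `g(λ) = μ`,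
`Y(λ) = y`, satisfying `B(s,g(s))Y(s) = 0` and `cᵀY(s) = 1` near `λ`, and
`(A₁ + λA₂ + g(λ)A₃)x = 0`. -/
theorem nonlinearization_equivalence
    (n m : ℕ) (A₁ A₂ A₃ : Matrix (Fin n) (Fin n) ℂ)
    (B₁ B₂ B₃ : Matrix (Fin m) (Fin m) ℂ) (c : Fin m → ℂ)
    (lam μ : ℂ) (x : Fin n → ℂ) (y : Fin m → ℂ)
    (hc : c ⬝ᵥ y = 1)
    (hJ : IsUnit (Matrix.fromBlocks (B₁ + lam • B₂ + μ • B₃)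
        (Matrix.replicateCol (Fin 1) (B₃ *ᵥ y)) (Matrix.replicateRow (Fin 1) c) 0)) :
    ((A₁ + lam • A₂ + μ • A₃) *ᵥ x = 0 ∧ (B₁ + lam • B₂ + μ • B₃) *ᵥ y = 0)
    ↔
    (∃ (g : ℂ → ℂ) (Y : ℂ → (Fin m → ℂ)),
      AnalyticAt ℂ g lam ∧ AnalyticAt ℂ Y lam ∧
      g lam = μ ∧ Y lam = y ∧
      (∀ᶠ s in nhds lam,
        (B₁ + s • B₂ + g s • B₃) *ᵥ (Y s) = 0 ∧ c ⬝ᵥ (Y s) = 1) ∧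
      (A₁ + lam • A₂ + g lam • A₃) *ᵥ x = 0) := by
  constructor
  · rintro ⟨hA, hB⟩
    obtain ⟨ψ, hψ, hψlam, hψeq⟩ :=
      (contDiff_twoParameterResidual B₁ B₂ B₃ c).contDiffAt.exists_analyticAt_implicitFunction
        (isInvertible_fderiv_twoParameterResidual hJ)
    obtain ⟨hg, hY⟩ := Prod.ext_iff.mp hψlam
    have hbase : twoParameterResidual B₁ B₂ B₃ c (lam, μ, y) = (1, 0) := Prod.ext hc hB
    refine ⟨fun s ↦ (ψ s).1, fun s ↦ (ψ s).2, analyticAt_fst.comp hψ, analyticAt_snd.comp hψ,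
      hg, hY, ?_, by simpa only [hg] using hA⟩
    filter_upwards [hψeq] with s hs
    rw [hbase] at hs
    exact ⟨congrArg Prod.snd hs, congrArg Prod.fst hs⟩
  · rintro ⟨g, Y, -, -, rfl, rfl, hev, hA⟩
    exact ⟨hA, hev.self_of_nhds.1⟩
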